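/- Let (φ,Q,ξ,η,g) be a weak contact metric structure on M, let X be a smooth vector field on M, and set f := η(X) (a smooth function on M). Then X is a weak contact vector field — i.e., there exists a smooth function σ : M → ℝ with X(η(Y)) - η([X,Y]) = σ·η(Y) for all smooth vector fields Y — if and only if g(QX, Y) = ½·(φY)(f) + ν·f·η(Y) for all smooth vector fields Y (equivalently, QX = -½·φ(∇f) + ν·f·ξ, where ∇f is the g-gradient of f). In this case σ = ξ(f); in particular, X is a strict weak contact vector field (σ ≡ 0) if and only if ξ(f) ≡ 0. -/

import Mathlib

/-!
Write `f = η X`. The contact condition `Φ = dη` turns the Lie derivative into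
`(£_X η) Y = 2 g(X, φY) + Y f`; since `φ ξ = 0`, evaluating at `ξ` forces `σ = ξ f`.
The form `P Y = (£_X η) Y - (ξ f) η Y` is linear over the smooth functions and vanishes at `ξ`,
and `ker η` lies in the image of `φ` (on `ker η`, `φ² = -Q` and `Q` is onto), so `X` is a weak
contact vector field iff `P ∘ φ = 0`. As `Q` is `g`-self-adjoint and `Q = -φ² + η ⊗ Qξ`,
the identity `P (φ Y) = 0` is exactly the formula for `g(QX, Y)`.
-/

open scoped Manifold

noncomputable section

/-- Smooth vector fields on a manifold `M`, modelled as derivations of the algebra of smooth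
real-valued functions on `M`. -/
abbrev VectorField {E : Type*} [NormedAddCommGroup E] [NormedSpace ℝ E]
    {H : Type*} [TopologicalSpace H] (I : ModelWithCorners ℝ E H)
    (M : Type*) [TopologicalSpace M] [ChartedSpace H M] :=
  Derivation ℝ C^(⊤ : ℕ∞)⟮I, M; ℝ⟯ C^(⊤ : ℕ∞)⟮I, M; ℝ⟯

variable {E : Type*} [NormedAddCommGroup E] [NormedSpace ℝ E]
  {H : Type*} [TopologicalSpace H] {I : ModelWithCorners ℝ E H}
  {M : Type*} [TopologicalSpace M] [ChartedSpace H M]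

/-- `dη(X,Y) = ½ (X(η(Y)) - Y(η(X)) - η([X,Y]))`. -/
def dEta (η : VectorField I M →ₗ[C^(⊤ : ℕ∞)⟮I, M; ℝ⟯] C^(⊤ : ℕ∞)⟮I, M; ℝ⟯)
    (X Y : VectorField I M) : C^(⊤ : ℕ∞)⟮I, M; ℝ⟯ :=
  (2 : ℝ)⁻¹ • (X (η Y) - Y (η X) - η ⁅X, Y⁆)

/-- The Nijenhuis torsion `[φ,φ](X,Y) = φ²[X,Y] + [φX,φY] - φ[φX,Y] - φ[X,φY]`. -/
def nijenhuis (φ : VectorField I M → VectorField I M) (X Y : VectorField I M) :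
    VectorField I M :=
  φ (φ ⁅X, Y⁆) + ⁅φ X, φ Y⁆ - φ ⁅φ X, Y⁆ - φ ⁅X, φ Y⁆

/-- `N⁽¹⁾(X,Y) = [φ,φ](X,Y) + 2 dη(X,Y) Qξ`. -/
def N1 (φ Q : VectorField I M →ₗ[C^(⊤ : ℕ∞)⟮I, M; ℝ⟯] VectorField I M)
    (ξ : VectorField I M) (η : VectorField I M →ₗ[C^(⊤ : ℕ∞)⟮I, M; ℝ⟯] C^(⊤ : ℕ∞)⟮I, M; ℝ⟯)
    (X Y : VectorField I M) : VectorField I M :=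
  nijenhuis ⇑φ X Y + ((2 : ℝ) • dEta η X Y) • Q ξ

/-- `N⁽²⁾(X,Y) = (φX)(η(Y)) - η([φX,Y]) - (φY)(η(X)) + η([φY,X])`. -/
def N2 (φ : VectorField I M →ₗ[C^(⊤ : ℕ∞)⟮I, M; ℝ⟯] VectorField I M)
    (η : VectorField I M →ₗ[C^(⊤ : ℕ∞)⟮I, M; ℝ⟯] C^(⊤ : ℕ∞)⟮I, M; ℝ⟯)
    (X Y : VectorField I M) : C^(⊤ : ℕ∞)⟮I, M; ℝ⟯ :=
  (φ X) (η Y) - η ⁅φ X, Y⁆ - (φ Y) (η X) + η ⁅φ Y, X⁆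

namespace Derivation

variable {R A M : Type*} [CommSemiring R] [CommSemiring A] [Algebra R A] [AddCommMonoid M]
  [Module A M] [Module R M] [IsScalarTower R A M]

def evalₗ (a : A) : Derivation R A M →ₗ[A] M where
  toFun D := D a
  map_add' _ _ := rfl
  map_smul' _ _ := rfl

@[simp]
theorem evalₗ_apply (a : A) (D : Derivation R A M) : evalₗ a D = D a := rfl

end Derivation

section WeakAlmostContact

variable {R V : Type*} [CommRing R] [AddCommGroup V] [Module R V]
  {φ Q : V →ₗ[R] V} {ξ : V} {η : V →ₗ[R] R} {g : V →ₗ[R] V →ₗ[R] R}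

theorem eta_sub_eta_smul_eq_zero (hηξ : η ξ = 1) (W : V) : η (W - η W • ξ) = 0 := by
  rw [map_sub, map_smul, hηξ, smul_eq_mul, mul_one, sub_self]

theorem phi_xi_eq_zero (hφφ : ∀ X, φ (φ X) = -(Q X) + η X • Q ξ) (hηξ : η ξ = 1)
    (hanti : ∀ A B, g A (φ B) = -g B (φ A)) (hg_def : ∀ X, g X X = 0 → X = 0) : φ ξ = 0 := by
  have hφφξ : φ (φ ξ) = 0 := by rw [hφφ, hηξ, one_smul, neg_add_cancel]
  exact hg_def _ (by rw [hanti, hφφξ, map_zero, neg_zero])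

theorem eta_phi_apply (hηξ : η ξ = 1) (hD : ∀ X, η X = 0 → η (φ X) = 0) (hφξ : φ ξ = 0)
    (W : V) : η (φ W) = 0 := by
  have h := hD _ (eta_sub_eta_smul_eq_zero hηξ W)
  rwa [map_sub, map_smul, hφξ, smul_zero, sub_zero] at h

theorem g_xi_apply (hQ : Function.Surjective Q)
    (hcompat : ∀ X Y, g (φ X) (φ Y) = g X (Q Y) - η X * η (Q Y)) (hηξ : η ξ = 1)
    (hφξ : φ ξ = 0) (Z : V) : g ξ Z = η Z := by
  obtain ⟨W, rfl⟩ := hQ Z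
  have h := hcompat ξ W
  rwa [hφξ, map_zero, LinearMap.zero_apply, hηξ, one_mul, eq_comm, sub_eq_zero] at h

theorem eq_zero_of_apply_phi_eq_zero (hηξ : η ξ = 1)
    (hker : LinearMap.ker η ≤ LinearMap.range φ) {P : V →ₗ[R] R} (hPξ : P ξ = 0)
    (hPφ : ∀ W, P (φ W) = 0) : P = 0 := by
  ext Y
  obtain ⟨W, hW⟩ := hker (eta_sub_eta_smul_eq_zero hηξ Y)
  rw [LinearMap.zero_apply, ← sub_add_cancel Y (η Y • ξ), ← hW, map_add, map_smul, hPφ, hPξ,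
    smul_zero, add_zero]

variable {𝕜 : Type*} [Field 𝕜] [Algebra 𝕜 R] {ν : 𝕜}

theorem g_Q_comm (hg_symm : ∀ X Y, g X Y = g Y X)
    (hcompat : ∀ X Y, g (φ X) (φ Y) = g X (Q Y) - η X * η (Q Y))
    (hηQ : ∀ W, η (Q W) = ν • η W) (A B : V) : g (Q A) B = g A (Q B) := by
  have h := (hcompat B A).symm.trans ((hg_symm _ _).trans (hcompat A B))
  rw [hηQ, hηQ, Algebra.mul_smul_comm, Algebra.mul_smul_comm, mul_comm, sub_left_inj] at h
  rw [hg_symm, h]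

theorem ker_eta_le_range_phi (hQ : Function.Surjective Q) (hν : ν ≠ 0)
    (hφφ : ∀ X, φ (φ X) = -(Q X) + η X • Q ξ) (hηQ : ∀ W, η (Q W) = ν • η W) :
    LinearMap.ker η ≤ LinearMap.range φ := by
  intro Y hY
  obtain ⟨Z, rfl⟩ := hQ Y
  have hZ : η Z = 0 := by
    rw [LinearMap.mem_ker, hηQ] at hY
    exact (smul_eq_zero.mp hY).resolve_left hν
  refine ⟨-φ Z, ?_⟩
  rw [map_neg, hφφ, hZ, zero_smul, add_zero, neg_neg]

variable [Module 𝕜 V] [IsScalarTower 𝕜 R V]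

theorem eta_Q_apply (hφφ : ∀ X, φ (φ X) = -(Q X) + η X • Q ξ) (hηξ : η ξ = 1)
    (hQξ : Q ξ = ν • ξ) (hD : ∀ X, η X = 0 → η (φ X) = 0) (W : V) :
    η (Q W) = ν • η W := by
  set W₀ := W - η W • ξ
  have hW₀ : η W₀ = 0 := eta_sub_eta_smul_eq_zero hηξ W
  have hQW₀ : η (Q W₀) = 0 := by
    simpa [hφφ W₀, hW₀] using hD _ (hD _ hW₀)
  have hsplit : Q W = Q W₀ + η W • ν • ξ := by
    rw [← hQξ, ← map_smul, ← map_add, sub_add_cancel]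
  rw [hsplit, map_add, hQW₀, map_smul, LinearMap.map_smul_of_tower, hηξ, zero_add, smul_eq_mul,
    Algebra.mul_smul_comm, mul_one]

theorem g_Q_apply (hQsym : ∀ A B, g (Q A) B = g A (Q B))
    (hφφ : ∀ X, φ (φ X) = -(Q X) + η X • Q ξ) (hQξ : Q ξ = ν • ξ) {X : V} (hXξ : g X ξ = η X)
    (Y : V) : g (Q X) Y = -g X (φ (φ Y)) + ν • (η X * η Y) := by
  have hQY : Q Y = -φ (φ Y) + η Y • ν • ξ := by rw [hφφ, hQξ]; abel
  rw [hQsym, hQY, map_add, map_neg, map_smul, LinearMap.map_smul_of_tower, hXξ, smul_eq_mul,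
    Algebra.mul_smul_comm, mul_comm]

end WeakAlmostContact

theorem neg_eq_inv_smul_iff_smul_add_eq_zero {K W : Type*} [DivisionRing K] [AddCommGroup W]
    [Module K W] {c : K} (hc : c ≠ 0) (a b : W) : -a = c⁻¹ • b ↔ c • a + b = 0 := by
  rw [eq_inv_smul_iff₀ hc, smul_neg, neg_eq_iff_eq_neg, add_eq_zero_iff_eq_neg]

section VectorField

theorem dEta_swap (η : VectorField I M →ₗ[C^(⊤ : ℕ∞)⟮I, M; ℝ⟯] C^(⊤ : ℕ∞)⟮I, M; ℝ⟯)
    (X Y : VectorField I M) :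
    dEta η Y X = -dEta η X Y := by
  rw [dEta, dEta, ← lie_skew X Y, map_neg, ← smul_neg]
  congr 1
  abel

theorem apply_eta_sub_eta_lie (η : VectorField I M →ₗ[C^(⊤ : ℕ∞)⟮I, M; ℝ⟯] C^(⊤ : ℕ∞)⟮I, M; ℝ⟯)
    (X Y : VectorField I M) :
    X (η Y) - η ⁅X, Y⁆ = (2 : ℝ) • dEta η X Y + Y (η X) := by
  rw [dEta, smul_smul, mul_inv_cancel₀ two_ne_zero, one_smul]
  abel

variable {φ : VectorField I M →ₗ[C^(⊤ : ℕ∞)⟮I, M; ℝ⟯] VectorField I M} {ξ X : VectorField I M}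
  {η : VectorField I M →ₗ[C^(⊤ : ℕ∞)⟮I, M; ℝ⟯] C^(⊤ : ℕ∞)⟮I, M; ℝ⟯}
  {g : VectorField I M →ₗ[C^(⊤ : ℕ∞)⟮I, M; ℝ⟯] VectorField I M →ₗ[C^(⊤ : ℕ∞)⟮I, M; ℝ⟯]
    C^(⊤ : ℕ∞)⟮I, M; ℝ⟯}

theorem eq_of_apply_eta_sub_eta_lie_eq_mul (hcontact : ∀ X Y, g X (φ Y) = dEta η X Y)
    (hφξ : φ ξ = 0) (hηξ : η ξ = 1) {σ : C^(⊤ : ℕ∞)⟮I, M; ℝ⟯}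
    (h : ∀ Y, X (η Y) - η ⁅X, Y⁆ = σ * η Y) :
    σ = ξ (η X) := by
  have h := h ξ
  rwa [apply_eta_sub_eta_lie, ← hcontact, hφξ, map_zero, smul_zero, zero_add, hηξ, mul_one,
    eq_comm] at h

theorem apply_eta_sub_eta_lie_eq_mul_iff (hcontact : ∀ X Y, g X (φ Y) = dEta η X Y)
    (hφξ : φ ξ = 0) (hηξ : η ξ = 1) (hD : ∀ X, η X = 0 → η (φ X) = 0)
    (hker : LinearMap.ker η ≤ LinearMap.range φ) :
    (∀ Y, X (η Y) - η ⁅X, Y⁆ = ξ (η X) * η Y) ↔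
      ∀ Y, (2 : ℝ) • g X (φ (φ Y)) + (φ Y) (η X) = 0 := by
  set P : VectorField I M →ₗ[C^(⊤ : ℕ∞)⟮I, M; ℝ⟯] C^(⊤ : ℕ∞)⟮I, M; ℝ⟯ :=
    (2 : ℝ) • (g X).comp φ + Derivation.evalₗ (η X) - ξ (η X) • η with hP
  have hPapply : ∀ Y, P Y = X (η Y) - η ⁅X, Y⁆ - ξ (η X) * η Y := fun Y ↦ by
    simp [hP, apply_eta_sub_eta_lie, hcontact]
  have hPφ : ∀ Y, P (φ Y) = (2 : ℝ) • g X (φ (φ Y)) + (φ Y) (η X) := fun Y ↦ by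
    simp [hP, eta_phi_apply hηξ hD hφξ]
  have hPξ : P ξ = 0 := by simp [hP, hφξ, hηξ]
  calc (∀ Y, X (η Y) - η ⁅X, Y⁆ = ξ (η X) * η Y) ↔ P = 0 := by
        simp only [LinearMap.ext_iff, hPapply, LinearMap.zero_apply, sub_eq_zero]
    _ ↔ ∀ Y, P (φ Y) = 0 := ⟨fun h Y ↦ by rw [h, LinearMap.zero_apply],
        eq_zero_of_apply_phi_eq_zero hηξ hker hPξ⟩
    _ ↔ _ := by simp only [hPφ]

end VectorField

theorem weak_contact_vector_field_characterization_general
    (φ Q : VectorField I M →ₗ[C^(⊤ : ℕ∞)⟮I, M; ℝ⟯] VectorField I M)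
    (hQ : Function.Bijective Q)
    (ξ : VectorField I M)
    (η : VectorField I M →ₗ[C^(⊤ : ℕ∞)⟮I, M; ℝ⟯] C^(⊤ : ℕ∞)⟮I, M; ℝ⟯)
    (g : VectorField I M →ₗ[C^(⊤ : ℕ∞)⟮I, M; ℝ⟯] VectorField I M →ₗ[C^(⊤ : ℕ∞)⟮I, M; ℝ⟯] C^(⊤ : ℕ∞)⟮I, M; ℝ⟯)
    (ν : ℝ) (hν : 0 < ν)
    (hφφ : ∀ X, φ (φ X) = -(Q X) + η X • Q ξ)
    (hηξ : η ξ = 1)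
    (hQξ : Q ξ = ν • ξ)
    (hD : ∀ X, η X = 0 → η (φ X) = 0)
    (hg_symm : ∀ X Y, g X Y = g Y X)
    (hg_def : ∀ X, g X X = 0 → X = 0)
    (hcompat : ∀ X Y, g (φ X) (φ Y) = g X (Q Y) - η X * η (Q Y))
    (hcontact : ∀ X Y, g X (φ Y) = dEta η X Y)
    (X : VectorField I M)
    :
    ((∃ σ : C^(⊤ : ℕ∞)⟮I, M; ℝ⟯, ∀ Y, X (η Y) - η ⁅X, Y⁆ = σ * η Y) ↔
      (∀ Y, g (Q X) Y = (2 : ℝ)⁻¹ • ((φ Y) (η X)) + ν • (η X * η Y))) ∧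
    (∀ σ : C^(⊤ : ℕ∞)⟮I, M; ℝ⟯, (∀ Y, X (η Y) - η ⁅X, Y⁆ = σ * η Y) → σ = ξ (η X)) ∧
    ((∃ σ : C^(⊤ : ℕ∞)⟮I, M; ℝ⟯, ∀ Y, X (η Y) - η ⁅X, Y⁆ = σ * η Y) →
      ((∀ Y, X (η Y) - η ⁅X, Y⁆ = 0) ↔ ξ (η X) = 0)) := by
  have hφξ : φ ξ = 0 :=
    phi_xi_eq_zero hφφ hηξ (fun A B ↦ by rw [hcontact, hcontact, dEta_swap]) hg_def
  have hηQ := eta_Q_apply hφφ hηξ hQξ hD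
  have hσ : ∀ σ, (∀ Y, X (η Y) - η ⁅X, Y⁆ = σ * η Y) → σ = ξ (η X) := fun _ ↦
    eq_of_apply_eta_sub_eta_lie_eq_mul hcontact hφξ hηξ
  have hweak : (∃ σ, ∀ Y, X (η Y) - η ⁅X, Y⁆ = σ * η Y) ↔
      ∀ Y, X (η Y) - η ⁅X, Y⁆ = ξ (η X) * η Y :=
    ⟨fun ⟨σ, h⟩ ↦ hσ σ h ▸ h, fun h ↦ ⟨_, h⟩⟩
  have hXξ : g X ξ = η X := (hg_symm X ξ).trans (g_xi_apply hQ.2 hcompat hηξ hφξ X)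
  refine ⟨hweak.trans ((apply_eta_sub_eta_lie_eq_mul_iff hcontact hφξ hηξ hD
    (ker_eta_le_range_phi hQ.2 hν.ne' hφφ hηQ)).trans ?_), hσ, ?_⟩
  · simp only [g_Q_apply (g_Q_comm hg_symm hcompat hηQ) hφφ hQξ hXξ, add_left_inj,
      neg_eq_inv_smul_iff_smul_add_eq_zero (two_ne_zero' ℝ)]
  · rintro ⟨σ, h⟩
    obtain rfl := hσ σ h
    exact ⟨fun h0 ↦ (hσ 0 (by simpa using h0)).symm, fun h0 Y ↦ by rw [h, h0, zero_mul]⟩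

theorem weak_contact_vector_field_characterization
    [FiniteDimensional ℝ E] [I.Boundaryless] [IsManifold I (⊤ : ℕ∞) M]
    (n : ℕ) (hn : 1 ≤ n) (hdim : Module.finrank ℝ E = 2 * n + 1)
    (φ Q : VectorField I M →ₗ[C^(⊤ : ℕ∞)⟮I, M; ℝ⟯] VectorField I M)
    (hQ : Function.Bijective Q)
    (ξ : VectorField I M)
    (η : VectorField I M →ₗ[C^(⊤ : ℕ∞)⟮I, M; ℝ⟯] C^(⊤ : ℕ∞)⟮I, M; ℝ⟯)
    (g : VectorField I M →ₗ[C^(⊤ : ℕ∞)⟮I, M; ℝ⟯] VectorField I M →ₗ[C^(⊤ : ℕ∞)⟮I, M; ℝ⟯] C^(⊤ : ℕ∞)⟮I, M; ℝ⟯)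
    (ν : ℝ) (hν : 0 < ν)
    (hφφ : ∀ X, φ (φ X) = -(Q X) + η X • Q ξ)
    (hηξ : η ξ = 1)
    (hQξ : Q ξ = ν • ξ)
    (hD : ∀ X, η X = 0 → η (φ X) = 0)
    (hg_symm : ∀ X Y, g X Y = g Y X)
    (hg_pos : ∀ X (x : M), 0 ≤ g X X x)
    (hg_def : ∀ X, g X X = 0 → X = 0)
    (hcompat : ∀ X Y, g (φ X) (φ Y) = g X (Q Y) - η X * η (Q Y))
    (hcontact : ∀ X Y, g X (φ Y) = dEta η X Y)
    (X : VectorField I M)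
    :
    ((∃ σ : C^(⊤ : ℕ∞)⟮I, M; ℝ⟯, ∀ Y, X (η Y) - η ⁅X, Y⁆ = σ * η Y) ↔
      (∀ Y, g (Q X) Y = (2 : ℝ)⁻¹ • ((φ Y) (η X)) + ν • (η X * η Y))) ∧
    (∀ σ : C^(⊤ : ℕ∞)⟮I, M; ℝ⟯, (∀ Y, X (η Y) - η ⁅X, Y⁆ = σ * η Y) → σ = ξ (η X)) ∧
    ((∃ σ : C^(⊤ : ℕ∞)⟮I, M; ℝ⟯, ∀ Y, X (η Y) - η ⁅X, Y⁆ = σ * η Y) →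
      ((∀ Y, X (η Y) - η ⁅X, Y⁆ = 0) ↔ ξ (η X) = 0)) :=
  weak_contact_vector_field_characterization_general φ Q hQ ξ η g ν hν hφφ hηξ hQξ hD hg_symm hg_def
    hcompat hcontact X
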